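/- arXiv:1110.3077 — 2 statements merged into one kernel-verified Lean document; each statement's English description precedes it below -/
import Mathlib

section
/- Let G be a simple graph on a nonempty finite vertex set V and let O and P be acyclic orientations of G. For an ordered set partition C = (S_1,…,S_k) of V into nonempty blocks, let or(C,O) be the orientation of G directing each edge uv with u ∈ S_i, v ∈ S_j, i < j, from u to v, and agreeing with O on edges with both endpoints in the same block; let r(C,O) be the number of directed edges (u,v) of O with u ∈ S_j and v ∈ S_i for some i < j. Then, as an identity in the polynomial ring ℤ[q], the sum over all ordered set partitions C of V into nonempty blocks with or(C,O) = P of (-1)^k q^{r(C,O)} (where k is the number of blocks of C) equals (-1)^{|V|} q^{e(G)} if P is the reverse orientation of O, and equals 0 otherwise. Here e(G) is the number of edges of G. -/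
/-!
Classify the compositions `C` with `or(C, O) = P` by their first block `S`: it is a nonempty set
on which `P` agrees with `O` and from which every edge to the remaining vertices is directed
forward by `P`. By strong induction on the vertex set `W`, the signed count of such compositions
of `W` becomes an alternating sum over the splittings `W = S ⊔ T` (`P` agrees with `O` on `S`, is
opposite to `O` on `T`, and points from `S` to `T`), with the term `S = ∅` missing. That sum
vanishes for nonempty `W`: for a source `v` of `O` in `W`, the `P`-direction of any edge at `v`
decides whether `v ∈ S`, which reduces to `W \ {v}`, and if there is no such edge then adding or
removing `v` is a sign-reversing involution. Hence the signed count is `(-1)^|W|` when `P`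
reverses `O` on `W`, and `0` otherwise. The exponent `r(C, O)` does not depend on `C`: it is the
number of edges on which `O` and `P` disagree.
-/

namespace GraphSpecies

variable {V : Type*}

def IsOrientationOn (G : SimpleGraph V) (S : Set V) (O : V → V → Prop) : Prop :=
  (∀ u v, O u v → u ∈ S ∧ v ∈ S ∧ G.Adj u v) ∧
  (∀ u v, u ∈ S → v ∈ S → G.Adj u v → O u v ∨ O v u) ∧
  (∀ u v, ¬ (O u v ∧ O v u))

def IsAcyclicOrientationOn (G : SimpleGraph V) (S : Set V) (O : V → V → Prop) : Prop :=
  IsOrientationOn G S O ∧ Irreflexive (Relation.TransGen O)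

def restrictO (O : V → V → Prop) (A : Set V) : V → V → Prop :=
  fun u v => O u v ∧ u ∈ A ∧ v ∈ A

def prodO (G : SimpleGraph V) (S T : Set V) (O P : V → V → Prop) : V → V → Prop :=
  fun u v => O u v ∨ P u v ∨ (u ∈ S ∧ v ∈ T ∧ G.Adj u v)

def flipO (O : V → V → Prop) : V → V → Prop := fun u v => O v u

noncomputable def eCount (O : V → V → Prop) (A B : Set V) : ℕ :=
  {p : V × V | O p.1 p.2 ∧ p.1 ∈ A ∧ p.2 ∈ B}.ncard

noncomputable def eCross (G : SimpleGraph V) (A B : Set V) : ℕ :=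
  {p : V × V | G.Adj p.1 p.2 ∧ p.1 ∈ A ∧ p.2 ∈ B}.ncard

def IsComposition [DecidableEq V] (X : Finset V) (C : List (Finset V)) : Prop :=
  (∀ B ∈ C, B.Nonempty) ∧ C.Pairwise Disjoint ∧ C.foldr (· ∪ ·) ∅ = X

def earlier (C : List (Finset V)) (u v : V) : Prop :=
  ∃ i j : Fin C.length, i < j ∧ u ∈ C.get i ∧ v ∈ C.get j

def sameBlock (C : List (Finset V)) (u v : V) : Prop :=
  ∃ i : Fin C.length, u ∈ C.get i ∧ v ∈ C.get i

def restrictC [DecidableEq V] (C : List (Finset V)) (S : Finset V) : List (Finset V) :=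
  (C.map (· ∩ S)).filter fun B => B.Nonempty

def IsStableComposition [DecidableEq V] (G : SimpleGraph V) (S : Finset V)
    (C : List (Finset V)) : Prop :=
  IsComposition S C ∧ ∀ B ∈ C, ∀ u ∈ B, ∀ v ∈ B, ¬ G.Adj u v

def edgeRestrict (F : Set (Sym2 V)) (S : Set V) : Set (Sym2 V) :=
  {e | e ∈ F ∧ ∀ v ∈ e, v ∈ S}

def IsFlatOn (G : SimpleGraph V) (S : Set V) (F : Set (Sym2 V)) : Prop :=
  F ⊆ G.edgeSet ∧ (∀ e ∈ F, ∀ v ∈ e, v ∈ S) ∧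
  ∀ u v, u ∈ S → v ∈ S → G.Adj u v →
    (SimpleGraph.fromEdgeSet F).Reachable u v → s(u, v) ∈ F

def IsLinList (ℓ : List V) : Prop := ℓ.Nodup ∧ ∀ v : V, v ∈ ℓ

def after [DecidableEq V] (ℓ : List V) (u v : V) : Prop :=
  ℓ.idxOf v < ℓ.idxOf u

def linOfComp [DecidableEq V] (ℓ : List V) (C : List (Finset V)) : List V :=
  (C.map fun B => ℓ.filter fun v => v ∈ B).flatten


def orC (G : SimpleGraph V) (C : List (Finset V)) (O : V → V → Prop) : V → V → Prop :=
  fun u v => (G.Adj u v ∧ earlier C u v) ∨ (O u v ∧ sameBlock C u v)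

noncomputable def rC (C : List (Finset V)) (O : V → V → Prop) : ℕ :=
  {p : V × V | O p.1 p.2 ∧ earlier C p.2 p.1}.ncard


section Orientation

variable {G : SimpleGraph V} {S : Set V} {O : V → V → Prop} {u v : V}

theorem IsOrientationOn.adj (h : IsOrientationOn G S O) (huv : O u v) : G.Adj u v :=
  (h.1 u v huv).2.2

theorem IsOrientationOn.asymm (h : IsOrientationOn G S O) (huv : O u v) : ¬ O v u :=
  fun hvu => h.2.2 u v ⟨huv, hvu⟩

theorem IsOrientationOn.rel_or_rel (h : IsOrientationOn G S O) (hu : u ∈ S) (hv : v ∈ S)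
    (huv : G.Adj u v) : O u v ∨ O v u :=
  h.2.1 u v hu hv huv

theorem IsAcyclicOrientationOn.exists_source (h : IsAcyclicOrientationOn G S O)
    {W : Finset V} (hW : W.Nonempty) : ∃ v ∈ W, ∀ u ∈ W, ¬ O u v := by
  have : IsStrictOrder V (Relation.TransGen O) :=
    { irrefl := h.2, trans := fun _ _ _ => .trans }
  obtain ⟨⟨v, hv⟩, -, hmin⟩ :=
    (W.finite_toSet.wellFoundedOn (r := Relation.TransGen O)).has_min Set.univ
      ⟨⟨_, hW.choose_spec⟩, trivial⟩
  exact ⟨v, hv, fun u hu huv => hmin ⟨u, hu⟩ trivial (.single huv)⟩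

end Orientation

section Compositions

variable {X S : Finset V} {C : List (Finset V)} {u v : V}

theorem sameBlock_cons :
    sameBlock (S :: C) u v ↔ (u ∈ S ∧ v ∈ S) ∨ sameBlock C u v := by
  simp [sameBlock, Fin.exists_fin_succ]

theorem earlier_cons :
    earlier (S :: C) u v ↔ (u ∈ S ∧ ∃ B ∈ C, v ∈ B) ∨ earlier C u v := by
  simp [earlier, Fin.exists_fin_succ, List.mem_iff_get]

variable [DecidableEq V]

theorem mem_foldr_union :
    v ∈ C.foldr (· ∪ ·) ∅ ↔ ∃ B ∈ C, v ∈ B := by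
  induction C <;> simp [*]

theorem subset_foldr_union {B : Finset V} (hB : B ∈ C) :
    B ⊆ C.foldr (· ∪ ·) ∅ :=
  fun _ hv => mem_foldr_union.2 ⟨B, hB, hv⟩

theorem isComposition_nil : IsComposition X [] ↔ X = ∅ := by
  simp [IsComposition, eq_comm]

theorem isComposition_cons :
    IsComposition X (S :: C) ↔ S.Nonempty ∧ S ⊆ X ∧ IsComposition (X \ S) C := by
  simp only [IsComposition, List.mem_cons, forall_eq_or_imp, List.pairwise_cons, List.foldr_cons]
  constructor
  · rintro ⟨⟨hS, hC⟩, ⟨hdisj, hpw⟩, rfl⟩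
    refine ⟨hS, Finset.subset_union_left, hC, hpw, (Finset.union_sdiff_cancel_left ?_).symm⟩
    refine Finset.disjoint_left.2 fun v hvS hv => ?_
    obtain ⟨B, hB, hvB⟩ := mem_foldr_union.1 hv
    exact Finset.disjoint_left.1 (hdisj B hB) hvS hvB
  · rintro ⟨hS, hSX, hC, hpw, hU⟩
    refine ⟨⟨hS, hC⟩, ⟨fun B hB => ?_, hpw⟩, ?_⟩
    · exact Finset.disjoint_sdiff.mono_right (hU ▸ subset_foldr_union hB)
    · rw [hU, Finset.union_sdiff_of_subset hSX]

theorem IsComposition.mem_iff (h : IsComposition X C) : v ∈ X ↔ ∃ B ∈ C, v ∈ B := by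
  rw [← h.2.2, mem_foldr_union]

theorem IsComposition.length_le_card (h : IsComposition X C) : C.length ≤ X.card := by
  induction C generalizing X with
  | nil => simp
  | cons S C ih =>
    obtain ⟨hS, hSX, hC⟩ := isComposition_cons.1 h
    have := Finset.card_sdiff_add_card_eq_card hSX
    have := hS.card_pos
    have := ih hC
    simp only [List.length_cons]
    omega

theorem IsComposition.earlier_or_sameBlock_or_earlier [Fintype V]
    (h : IsComposition Finset.univ C) (u v : V) :
    earlier C u v ∨ sameBlock C u v ∨ earlier C v u := by
  obtain ⟨B, hB, hu⟩ := h.mem_iff.1 (Finset.mem_univ u)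
  obtain ⟨B', hB', hv⟩ := h.mem_iff.1 (Finset.mem_univ v)
  obtain ⟨i, rfl⟩ := List.mem_iff_get.1 hB
  obtain ⟨j, rfl⟩ := List.mem_iff_get.1 hB'
  rcases lt_trichotomy i j with hij | rfl | hji
  · exact .inl ⟨i, j, hij, hu, hv⟩
  · exact .inr (.inl ⟨i, hu, hv⟩)
  · exact .inr (.inr ⟨j, i, hji, hv, hu⟩)

end Compositions

section Splittings

variable (G : SimpleGraph V) (O P : V → V → Prop)

def AgreeOn (S : Finset V) : Prop := ∀ u ∈ S, ∀ v ∈ S, O u v → P u v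

def OppositeOn (S : Finset V) : Prop := ∀ u ∈ S, ∀ v ∈ S, O u v → P v u

def DirectedAcross (S T : Finset V) : Prop := ∀ u ∈ S, ∀ v ∈ T, G.Adj u v → P u v

open Classical in
noncomputable def splittings [DecidableEq V] (W : Finset V) : Finset (Finset V) :=
  W.powerset.filter fun S =>
    AgreeOn O P S ∧ OppositeOn O P (W \ S) ∧ DirectedAcross G P S (W \ S)

variable {G O P} {S T : Finset V}

theorem AgreeOn.mono (h : AgreeOn O P S) (hT : T ⊆ S) : AgreeOn O P T :=
  fun u hu v hv => h u (hT hu) v (hT hv)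

theorem OppositeOn.mono (h : OppositeOn O P S) (hT : T ⊆ S) : OppositeOn O P T :=
  fun u hu v hv => h u (hT hu) v (hT hv)

theorem DirectedAcross.mono {S' T' : Finset V} (h : DirectedAcross G P S T) (hS : S' ⊆ S)
    (hT : T' ⊆ T) : DirectedAcross G P S' T' :=
  fun u hu v hv => h u (hS hu) v (hT hv)

variable [DecidableEq V] {W : Finset V} {u v : V}

theorem mem_splittings : S ∈ splittings G O P W ↔
    S ⊆ W ∧ AgreeOn O P S ∧ OppositeOn O P (W \ S) ∧ DirectedAcross G P S (W \ S) := by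
  simp [splittings]

theorem empty_mem_splittings : ∅ ∈ splittings G O P W ↔ OppositeOn O P W := by
  simp [mem_splittings, AgreeOn, DirectedAcross]

theorem erase_mem_splittings (hS : S ∈ splittings G O P W) (v : V) :
    S.erase v ∈ splittings G O P (W.erase v) := by
  obtain ⟨hSW, hagree, hopp, hdir⟩ := mem_splittings.1 hS
  have hsub : W.erase v \ S.erase v ⊆ W \ S := fun x => by
    simp only [Finset.mem_sdiff, Finset.mem_erase]; tauto
  exact mem_splittings.2 ⟨Finset.erase_subset_erase v hSW, hagree.mono (S.erase_subset v),
    hopp.mono hsub, hdir.mono (S.erase_subset v) hsub⟩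

theorem rel_of_mem_splittings (hO : IsOrientationOn G Set.univ O)
    (hsrc : ∀ u ∈ W, ¬ O u v) (hS : S ∈ splittings G O P W) (hvS : v ∈ S) (hu : u ∈ W)
    (hadj : G.Adj v u) : P v u := by
  obtain ⟨hSW, hagree, -, hdir⟩ := mem_splittings.1 hS
  by_cases huS : u ∈ S
  · exact hagree v hvS u huS ((hO.rel_or_rel trivial trivial hadj).resolve_right (hsrc u hu))
  · exact hdir v hvS u (Finset.mem_sdiff.2 ⟨hu, huS⟩) hadj

theorem rel_of_notMem_splittings (hO : IsOrientationOn G Set.univ O) (hv : v ∈ W)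
    (hsrc : ∀ u ∈ W, ¬ O u v)
    (hS : S ∈ splittings G O P W) (hvS : v ∉ S) (hu : u ∈ W)
    (hadj : G.Adj v u) : P u v := by
  obtain ⟨hSW, -, hopp, hdir⟩ := mem_splittings.1 hS
  by_cases huS : u ∈ S
  · exact hdir u huS v (Finset.mem_sdiff.2 ⟨hv, hvS⟩) hadj.symm
  · exact hopp v (Finset.mem_sdiff.2 ⟨hv, hvS⟩) u (Finset.mem_sdiff.2 ⟨hu, huS⟩)
      ((hO.rel_or_rel trivial trivial hadj).resolve_right (hsrc u hu))

theorem insert_mem_splittings (hO : IsOrientationOn G Set.univ O) (hv : v ∈ W)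
    (hsrc : ∀ u ∈ W, ¬ O u v)
    (hS : S ∈ splittings G O P (W.erase v))
    (hout : ∀ u ∈ W, G.Adj v u → P v u) : insert v S ∈ splittings G O P W := by
  obtain ⟨hSW, hagree, hopp, hdir⟩ := mem_splittings.1 hS
  have hSW' : S ⊆ W := hSW.trans (W.erase_subset v)
  have hsdiff : W \ insert v S = W.erase v \ S := by
    rw [Finset.sdiff_insert, Finset.erase_sdiff_comm]
  refine mem_splittings.2 ⟨Finset.insert_subset hv hSW', ?_, hsdiff ▸ hopp, hsdiff ▸ ?_⟩
  · intro x hx y hy hxy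
    rcases Finset.mem_insert.1 hx with rfl | hxS <;> rcases Finset.mem_insert.1 hy with rfl | hyS
    · exact ((hO.adj hxy).ne rfl).elim
    · exact hout y (hSW' hyS) (hO.adj hxy)
    · exact absurd hxy (hsrc x (hSW' hxS))
    · exact hagree x hxS y hyS hxy
  · intro x hx y hy hxy
    rcases Finset.mem_insert.1 hx with rfl | hx
    · exact hout y (Finset.mem_of_mem_erase (Finset.sdiff_subset hy)) hxy
    · exact hdir x hx y hy hxy

theorem mem_splittings_of_erase (hO : IsOrientationOn G Set.univ O) (hv : v ∈ W)
    (hsrc : ∀ u ∈ W, ¬ O u v)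
    (hS : S ∈ splittings G O P (W.erase v))
    (hin : ∀ u ∈ W, G.Adj v u → P u v) : S ∈ splittings G O P W := by
  obtain ⟨hSW, hagree, hopp, hdir⟩ := mem_splittings.1 hS
  have hSW' : S ⊆ W := hSW.trans (W.erase_subset v)
  have hvS : v ∉ S := fun h => by simpa using hSW h
  have hsdiff : W \ S = insert v (W.erase v \ S) := by
    rw [Finset.erase_sdiff_comm, Finset.insert_erase (Finset.mem_sdiff.2 ⟨hv, hvS⟩)]
  refine mem_splittings.2 ⟨hSW', hagree, hsdiff ▸ ?_, hsdiff ▸ ?_⟩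
  · intro x hx y hy hxy
    rcases Finset.mem_insert.1 hx with rfl | hxS <;> rcases Finset.mem_insert.1 hy with rfl | hyS
    · exact ((hO.adj hxy).ne rfl).elim
    · exact hin y (Finset.mem_of_mem_erase (Finset.sdiff_subset hyS)) (hO.adj hxy)
    · exact absurd hxy (hsrc x (Finset.mem_of_mem_erase (Finset.sdiff_subset hxS)))
    · exact hopp x hxS y hyS hxy
  · intro x hx y hy hxy
    rcases Finset.mem_insert.1 hy with rfl | hy
    · exact hin x (hSW' hx) hxy.symm
    · exact hdir x hx y hy hxy

theorem sum_splittings_eq_zero_of_isolated {R : Type*} [CommRing R]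
    (hO : IsOrientationOn G Set.univ O) (hv : v ∈ W)
    (hsrc : ∀ u ∈ W, ¬ O u v)
    (hout : ∀ u ∈ W, G.Adj v u → P v u) (hin : ∀ u ∈ W, G.Adj v u → P u v) :
    ∑ S ∈ splittings G O P W, (-1 : R) ^ S.card = 0 := by
  refine Finset.sum_involution (fun S _ => if v ∈ S then S.erase v else insert v S)
    (fun S _ => ?_) (fun S _ _ => ?_) (fun S hS => ?_) (fun S _ => ?_)
  · split_ifs with hvS
    · rw [← Finset.card_erase_add_one hvS, pow_succ]; ring
    · rw [Finset.card_insert_of_notMem hvS, pow_succ]; ring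
  · split_ifs with hvS
    · exact Finset.erase_ne_self.2 hvS
    · exact Finset.insert_ne_self.2 hvS
  · have hS' := erase_mem_splittings hS v
    split_ifs with hvS
    · exact mem_splittings_of_erase hO hv hsrc hS' hin
    · rw [← Finset.erase_eq_of_notMem hvS]
      exact insert_mem_splittings hO hv hsrc hS' hout
  · by_cases hvS : v ∈ S
    · simp [hvS, Finset.insert_erase]
    · simp [hvS]

theorem sum_splittings_eq_zero {R : Type*} [CommRing R]
    (hO : IsAcyclicOrientationOn G Set.univ O) (hW : W.Nonempty) :
    ∑ S ∈ splittings G O P W, (-1 : R) ^ S.card = 0 := by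
  induction W using Finset.strongInduction with
  | H W ih =>
  obtain ⟨v, hv, hsrc⟩ := hO.exists_source hW
  have ih' {u : V} (hu : u ∈ W) (huv : u ≠ v) :
      ∑ S ∈ splittings G O P (W.erase v), (-1 : R) ^ S.card = 0 :=
    ih _ (Finset.erase_ssubset hv) ⟨u, Finset.mem_erase.2 ⟨huv, hu⟩⟩
  -- `hout ∧ hin` can only hold if `v` has no neighbour in `W`.
  by_cases hout : ∀ u ∈ W, G.Adj v u → P v u <;>
    by_cases hin : ∀ u ∈ W, G.Adj v u → P u v
  · exact sum_splittings_eq_zero_of_isolated hO.1 hv hsrc hout hin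
  · push Not at hin
    obtain ⟨u, hu, hadj, hPuv⟩ := hin
    have hvS (S) (hS : S ∈ splittings G O P W) : v ∈ S :=
      by_contra fun hvS => hPuv (rel_of_notMem_splittings hO.1 hv hsrc hS hvS hu hadj)
    calc ∑ S ∈ splittings G O P W, (-1 : R) ^ S.card
        = ∑ S ∈ splittings G O P (W.erase v), -(-1 : R) ^ S.card := by
          refine Finset.sum_nbij' (·.erase v) (insert v) (fun S hS => erase_mem_splittings hS v)
            (fun S hS => insert_mem_splittings hO.1 hv hsrc hS hout)
            (fun S hS => Finset.insert_erase (hvS S hS))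
            (fun S hS => Finset.erase_insert fun h => by simpa using (mem_splittings.1 hS).1 h)
            (fun S hS => ?_)
          rw [← Finset.card_erase_add_one (hvS S hS), pow_succ, mul_neg_one]
      _ = 0 := by rw [Finset.sum_neg_distrib, ih' hu hadj.ne', neg_zero]
  · push Not at hout
    obtain ⟨u, hu, hadj, hPvu⟩ := hout
    have hsplit : splittings G O P W = splittings G O P (W.erase v) := by
      ext S
      refine ⟨fun hS => ?_, fun hS => mem_splittings_of_erase hO.1 hv hsrc hS hin⟩
      have hvS : v ∉ S := fun hvS => hPvu (rel_of_mem_splittings hO.1 hsrc hS hvS hu hadj)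
      simpa [Finset.erase_eq_of_notMem hvS] using erase_mem_splittings hS v
    rw [hsplit, ih' hu hadj.ne']
  · push Not at hout hin
    obtain ⟨u, hu, hadj, hPvu⟩ := hout
    obtain ⟨u', hu', hadj', hPuv⟩ := hin
    suffices splittings G O P W = ∅ by rw [this, Finset.sum_empty]
    refine Finset.eq_empty_of_forall_notMem fun S hS => ?_
    by_cases hvS : v ∈ S
    · exact hPvu (rel_of_mem_splittings hO.1 hsrc hS hvS hu hadj)
    · exact hPuv (rel_of_notMem_splittings hO.1 hv hsrc hS hvS hu' hadj')

end Splittings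

section CompatibleCompositions

variable [DecidableEq V] (G : SimpleGraph V) (O P : V → V → Prop)

/-- `or(C, O) = P`, stated for compositions of any vertex set `W` so that it can be recursed on. -/
def IsCompatibleComposition (W : Finset V) (C : List (Finset V)) : Prop :=
  IsComposition W C ∧ (∀ u v, O u v → sameBlock C u v → P u v) ∧
    ∀ u v, G.Adj u v → earlier C u v → P u v

open Classical in
noncomputable def firstBlocks (W : Finset V) : Finset (Finset V) :=
  W.powerset.filter fun S => S.Nonempty ∧ AgreeOn O P S ∧ DirectedAcross G P S (W \ S)

variable {G O P} {W S : Finset V} {C : List (Finset V)}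

theorem mem_firstBlocks : S ∈ firstBlocks G O P W ↔
    S ⊆ W ∧ S.Nonempty ∧ AgreeOn O P S ∧ DirectedAcross G P S (W \ S) := by
  simp [firstBlocks]

theorem isCompatibleComposition_nil : IsCompatibleComposition G O P W [] ↔ W = ∅ := by
  simp [IsCompatibleComposition, isComposition_nil, sameBlock, earlier]

theorem isCompatibleComposition_cons : IsCompatibleComposition G O P W (S :: C) ↔
    S ∈ firstBlocks G O P W ∧ IsCompatibleComposition G O P (W \ S) C := by
  constructor
  · rintro ⟨hcomp, hsame, hearly⟩
    obtain ⟨hSne, hSW, hC⟩ := isComposition_cons.1 hcomp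
    refine ⟨mem_firstBlocks.2 ⟨hSW, hSne, fun u hu v hv huv => ?_, fun u hu v hv huv => ?_⟩,
      hC, fun u v huv h => hsame u v huv (sameBlock_cons.2 (.inr h)),
      fun u v huv h => hearly u v huv (earlier_cons.2 (.inr h))⟩
    · exact hsame u v huv (sameBlock_cons.2 (.inl ⟨hu, hv⟩))
    · exact hearly u v huv (earlier_cons.2 (.inl ⟨hu, hC.mem_iff.1 hv⟩))
  · rintro ⟨hS, hC, hsame, hearly⟩
    obtain ⟨hSW, hSne, hagree, hdir⟩ := mem_firstBlocks.1 hS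
    refine ⟨isComposition_cons.2 ⟨hSne, hSW, hC⟩, fun u v huv h => ?_, fun u v huv h => ?_⟩
    · rcases sameBlock_cons.1 h with ⟨hu, hv⟩ | h
      · exact hagree u hu v hv huv
      · exact hsame u v huv h
    · rcases earlier_cons.1 h with ⟨hu, hv⟩ | h
      · exact hdir u hu v (hC.mem_iff.2 hv) huv
      · exact hearly u v huv h

open Classical in
theorem filter_firstBlocks_oppositeOn :
    (firstBlocks G O P W).filter (fun S => OppositeOn O P (W \ S)) =
      (splittings G O P W).erase ∅ := by
  ext S
  simp only [Finset.mem_filter, Finset.mem_erase, mem_firstBlocks, mem_splittings,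
    Finset.nonempty_iff_ne_empty]
  tauto

theorem neg_one_pow_card_sdiff {R : Type*} [CommRing R] (h : S ⊆ W) :
    (-1 : R) ^ (W \ S).card = (-1) ^ W.card * (-1) ^ S.card := by
  rw [← Finset.card_sdiff_add_card_eq_card h, pow_add, mul_assoc, ← pow_add, ← two_mul,
    pow_mul, neg_one_sq, one_pow, mul_one]

variable (G O P) [Finite V]

theorem finite_setOf_isCompatibleComposition (W : Finset V) :
    {C | IsCompatibleComposition G O P W C}.Finite :=
  (List.finite_length_le _ W.card).subset fun _ hC => hC.1.length_le_card

noncomputable def compatibleCompositions (W : Finset V) : Finset (List (Finset V)) :=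
  (finite_setOf_isCompatibleComposition G O P W).toFinset

variable {G O P}

theorem mem_compatibleCompositions :
    C ∈ compatibleCompositions G O P W ↔ IsCompatibleComposition G O P W C :=
  Set.Finite.mem_toFinset _

theorem compatibleCompositions_empty : compatibleCompositions G O P ∅ = {[]} := by
  ext (_ | ⟨S, C⟩)
  · simp [mem_compatibleCompositions, isCompatibleComposition_nil]
  · simp +contextual [mem_compatibleCompositions, isCompatibleComposition_cons, mem_firstBlocks]

theorem sum_compatibleCompositions_of_nonempty {R : Type*} [CommRing R] (hW : W.Nonempty) :
    ∑ C ∈ compatibleCompositions G O P W, (-1 : R) ^ C.length =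
      -∑ S ∈ firstBlocks G O P W, ∑ C ∈ compatibleCompositions G O P (W \ S),
        (-1 : R) ^ C.length := by
  rw [Finset.sum_sigma', ← Finset.sum_neg_distrib]
  symm
  refine Finset.sum_bij (fun p _ => p.1 :: p.2) (fun p hp => ?_) ?_ (fun C hC => ?_)
    (fun p _ => by simp [pow_succ])
  · rw [Finset.mem_sigma, mem_compatibleCompositions] at hp
    exact mem_compatibleCompositions.2 (isCompatibleComposition_cons.2 hp)
  · rintro ⟨S, C⟩ - ⟨S', C'⟩ - h
    obtain ⟨rfl, rfl⟩ := List.cons.inj h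
    rfl
  · rw [mem_compatibleCompositions] at hC
    cases C with
    | nil => exact absurd (isCompatibleComposition_nil.1 hC) hW.ne_empty
    | cons S C =>
      rw [isCompatibleComposition_cons, ← mem_compatibleCompositions] at hC
      exact ⟨⟨S, C⟩, Finset.mem_sigma.2 hC, rfl⟩

open Classical in
theorem sum_compatibleCompositions {R : Type*} [CommRing R]
    (hO : IsAcyclicOrientationOn G Set.univ O) (W : Finset V) :
    ∑ C ∈ compatibleCompositions G O P W, (-1 : R) ^ C.length =
      if OppositeOn O P W then (-1) ^ W.card else 0 := by
  induction W using Finset.strongInduction with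
  | H W ih =>
  rcases W.eq_empty_or_nonempty with rfl | hW
  · simp [compatibleCompositions_empty, OppositeOn]
  have hblock (S) (hS : S ∈ firstBlocks G O P W) :
      ∑ C ∈ compatibleCompositions G O P (W \ S), (-1 : R) ^ C.length =
        if OppositeOn O P (W \ S) then (-1) ^ (W \ S).card else 0 :=
    ih _ (Finset.sdiff_ssubset (mem_firstBlocks.1 hS).1 (mem_firstBlocks.1 hS).2.1)
  rw [sum_compatibleCompositions_of_nonempty hW, Finset.sum_congr rfl hblock, ← Finset.sum_filter,
    filter_firstBlocks_oppositeOn, Finset.sum_congr rfl fun S hS =>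
      neg_one_pow_card_sdiff (mem_splittings.1 (Finset.mem_of_mem_erase hS)).1, ← Finset.mul_sum]
  have hsum := sum_splittings_eq_zero (R := R) (P := P) hO hW
  by_cases hopp : OppositeOn O P W
  · rw [Finset.sum_erase_eq_sub (empty_mem_splittings.2 hopp), hsum, if_pos hopp]
    simp
  · rw [Finset.erase_eq_of_notMem (mt empty_mem_splittings.1 hopp), hsum, if_neg hopp]
    simp

end CompatibleCompositions

section

variable {G : SimpleGraph V} {O P : V → V → Prop}

theorem ncard_setOf_rel_eq_ncard_edgeSet (hO : IsOrientationOn G Set.univ O) :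
    {p : V × V | O p.1 p.2}.ncard = G.edgeSet.ncard := by
  have himg : (fun p : V × V => s(p.1, p.2)) '' {p | O p.1 p.2} = G.edgeSet := by
    ext ⟨x, y⟩
    simp only [Set.mem_image, Set.mem_ofPred_eq, SimpleGraph.mem_edgeSet]
    constructor
    · rintro ⟨⟨a, b⟩, hab, he⟩
      rcases Sym2.eq_iff.1 he with ⟨rfl, rfl⟩ | ⟨rfl, rfl⟩
      · exact hO.adj hab
      · exact (hO.adj hab).symm
    · intro hadj
      rcases hO.rel_or_rel trivial trivial hadj with h | h
      · exact ⟨(x, y), h, rfl⟩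
      · exact ⟨(y, x), h, Sym2.eq_swap⟩
  refine himg ▸ (Set.InjOn.ncard_image ?_).symm
  rintro ⟨a, b⟩ hab ⟨c, d⟩ hcd he
  rcases Sym2.eq_iff.1 he with ⟨rfl, rfl⟩ | ⟨rfl, rfl⟩
  · rfl
  · exact absurd hcd (hO.asymm hab)

theorem oppositeOn_univ_iff [Fintype V] (hO : IsOrientationOn G Set.univ O)
    (hP : IsOrientationOn G Set.univ P) : OppositeOn O P Finset.univ ↔ P = flipO O := by
  refine ⟨fun h => ?_, ?_⟩
  · ext u v
    refine ⟨fun hPuv => ?_, fun hOvu => h v (Finset.mem_univ v) u (Finset.mem_univ u) hOvu⟩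
    refine (hO.rel_or_rel trivial trivial (hP.adj hPuv)).resolve_left fun hOuv => ?_
    exact hP.asymm hPuv (h u (Finset.mem_univ u) v (Finset.mem_univ v) hOuv)
  · rintro rfl
    exact fun u _ v _ huv => huv

variable [Fintype V] [DecidableEq V] {C : List (Finset V)}

theorem isCompatibleComposition_univ_iff (hO : IsOrientationOn G Set.univ O)
    (hP : IsOrientationOn G Set.univ P) (hC : IsComposition Finset.univ C) :
    IsCompatibleComposition G O P Finset.univ C ↔ orC G C O = P := by
  refine ⟨fun ⟨_, hsame, hearly⟩ => ?_, ?_⟩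
  · ext u v
    refine ⟨fun h => h.elim (fun ⟨hadj, he⟩ => hearly u v hadj he)
      (fun ⟨huv, hs⟩ => hsame u v huv hs), fun hPuv => ?_⟩
    have hadj := hP.adj hPuv
    rcases hC.earlier_or_sameBlock_or_earlier u v with he | ⟨i, hu, hv⟩ | he
    · exact .inl ⟨hadj, he⟩
    · refine .inr ⟨(hO.rel_or_rel trivial trivial hadj).resolve_right fun hvu => ?_, i, hu, hv⟩
      exact hP.asymm hPuv (hsame v u hvu ⟨i, hv, hu⟩)
    · exact absurd (hearly v u hadj.symm he) (hP.asymm hPuv)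
  · rintro rfl
    exact ⟨hC, fun u v huv hs => .inr ⟨huv, hs⟩, fun u v hadj he => .inl ⟨hadj, he⟩⟩

theorem rC_eq_ncard (hO : IsOrientationOn G Set.univ O) (hP : IsOrientationOn G Set.univ P)
    (hC : IsComposition Finset.univ C) (h : orC G C O = P) :
    rC C O = {p : V × V | O p.1 p.2 ∧ P p.2 p.1}.ncard := by
  subst h
  unfold rC
  congr 1
  ext ⟨u, v⟩
  refine and_congr_right fun huv => ⟨fun he => .inl ⟨(hO.adj huv).symm, he⟩, fun hvu => ?_⟩
  rcases hC.earlier_or_sameBlock_or_earlier u v with he | hs | he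
  · exact absurd (.inl ⟨hO.adj huv, he⟩) (hP.asymm hvu)
  · exact absurd (.inr ⟨huv, hs⟩) (hP.asymm hvu)
  · exact he

end

theorem antipode_acyclic_orientations_general {V : Type*} [Fintype V] [DecidableEq V]
    (G : SimpleGraph V) (O P : V → V → Prop)
    (hO : IsAcyclicOrientationOn G Set.univ O)
    (hP : IsAcyclicOrientationOn G Set.univ P) :
    (P = flipO O →
      ∑ᶠ C ∈ {C : List (Finset V) | IsComposition Finset.univ C ∧ orC G C O = P},
          ((-1 : Polynomial ℤ)) ^ C.length * Polynomial.X ^ rC C O =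
        (-1 : Polynomial ℤ) ^ Fintype.card V * Polynomial.X ^ G.edgeSet.ncard) ∧
    (P ≠ flipO O →
      ∑ᶠ C ∈ {C : List (Finset V) | IsComposition Finset.univ C ∧ orC G C O = P},
          ((-1 : Polynomial ℤ)) ^ C.length * Polynomial.X ^ rC C O = 0) := by
  have hcompat {C : List (Finset V)} (hC : IsComposition Finset.univ C) :=
    isCompatibleComposition_univ_iff hO.1 hP.1 hC
  have hset : {C | IsComposition Finset.univ C ∧ orC G C O = P} =
      ↑(compatibleCompositions G O P Finset.univ) := by
    ext C
    rw [Set.mem_ofPred_eq, Finset.mem_coe, mem_compatibleCompositions]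
    exact ⟨fun ⟨hC, h⟩ => (hcompat hC).2 h, fun h => ⟨h.1, (hcompat h.1).1 h⟩⟩
  have hsum : ∑ᶠ C ∈ {C | IsComposition Finset.univ C ∧ orC G C O = P},
      (-1 : Polynomial ℤ) ^ C.length * Polynomial.X ^ rC C O =
      (∑ C ∈ compatibleCompositions G O P Finset.univ, (-1 : Polynomial ℤ) ^ C.length) *
        Polynomial.X ^ {p : V × V | O p.1 p.2 ∧ P p.2 p.1}.ncard := by
    rw [hset, finsum_mem_coe_finset, Finset.sum_mul]
    refine Finset.sum_congr rfl fun C hC => ?_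
    rw [mem_compatibleCompositions] at hC
    rw [rC_eq_ncard hO.1 hP.1 hC.1 ((hcompat hC.1).1 hC)]
  rw [hsum, sum_compatibleCompositions hO, Finset.card_univ]
  refine ⟨fun h => ?_, fun h => ?_⟩
  · rw [if_pos ((oppositeOn_univ_iff hO.1 hP.1).2 h)]
    subst h
    simp only [flipO, and_self, ncard_setOf_rel_eq_ncard_edgeSet hO.1]
  · rw [if_neg (mt (oppositeOn_univ_iff hO.1 hP.1).1 h), zero_mul]

theorem antipode_acyclic_orientations {V : Type*} [Fintype V] [DecidableEq V] [Nonempty V]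
    (G : SimpleGraph V) (O P : V → V → Prop)
    (hO : IsAcyclicOrientationOn G Set.univ O)
    (hP : IsAcyclicOrientationOn G Set.univ P) :
    (P = flipO O →
      ∑ᶠ C ∈ {C : List (Finset V) | IsComposition Finset.univ C ∧ orC G C O = P},
          ((-1 : Polynomial ℤ)) ^ C.length * Polynomial.X ^ rC C O =
        (-1 : Polynomial ℤ) ^ Fintype.card V * Polynomial.X ^ G.edgeSet.ncard) ∧
    (P ≠ flipO O →
      ∑ᶠ C ∈ {C : List (Finset V) | IsComposition Finset.univ C ∧ orC G C O = P},
          ((-1 : Polynomial ℤ)) ^ C.length * Polynomial.X ^ rC C O = 0) :=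
  antipode_acyclic_orientations_general G O P hO hP

end GraphSpecies
end

section
/- Let G be a simple graph on a nonempty finite vertex set V and let ℓ be a linear order on V. For an ordered set partition C = (S_1,…,S_k) of V into nonempty blocks, let ℓ(C) denote the linear order ℓ|_{S_1}·ℓ|_{S_2}·⋯·ℓ|_{S_k} on V (the concatenation of the restrictions of ℓ to the blocks, in order: all of S_1 before all of S_2, etc., with each block ordered by ℓ); let A(C) be the number of unordered pairs {u,v} with u ∈ S_i, v ∈ S_j, i < j, uv an edge of G, and u >_ℓ v; and let B(C) be the number of unordered pairs {u,v} with u ∈ S_i, v ∈ S_j, i < j, u ≠ v, uv not an edge of G, and u >_ℓ v. Then, as an identity in ℤ[q,t], for every linear order m on V, the sum over all ordered set partitions C of V into nonempty blocks with ℓ(C) = m of (-1)^k q^{A(C)} t^{B(C)} equals (-1)^{|V|} q^{e(G)} t^{e(Ḡ)} if m is the reverse (dual) order of ℓ, and equals 0 otherwise. Here e(G) is the number of edges of G and e(Ḡ) the number of edges of the complement graph Ḡ. -/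
/-!
If `ℓ(C) = m`, the blocks of `C` are consecutive runs of `m`, each increasing for `ℓ`, and
every cutting of `m` into `ℓ`-increasing runs arises from exactly one such `C`. A pair
`u >_ℓ v` cannot lie in one block in the order `u, v`, so it is separated by `C` exactly when
`u` comes before `v` in `m`: the weight `q^A t^B` depends on `m` only. In the signed count of
the cuttings, every `ℓ`-descent of `m` must be cut while every `ℓ`-ascent may be cut or not, so
the sum vanishes unless `m` has no ascent, i.e. `m` is the reverse of `ℓ`; then `C` consists of
singletons and every pair is counted.
-/

namespace GraphSpecies

variable {V : Type*}

section ChainSplits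

variable {α : Type*}

theorem modifyHead_injective {f : α → α} (hf : Function.Injective f) :
    Function.Injective (List.modifyHead f) := by
  intro l l' h
  cases l <;> cases l' <;> simp_all [hf.eq_iff]

theorem exists_eq_cons_cons_of_flatten_eq_cons {P : List (List α)} {x : α} {t : List α}
    (hP : P.flatten = x :: t) (hne : [] ∉ P) :
    ∃ a Q, P = (x :: a) :: Q ∧ a ++ Q.flatten = t := by
  match P, hP, hne with
  | [] :: _, _, hne => exact absurd List.mem_cons_self hne
  | (z :: a) :: Q, hP, _ =>
    simp only [List.flatten_cons, List.cons_append, List.cons.injEq] at hP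
    exact ⟨a, Q, by rw [hP.1], hP.2⟩

theorem eq_nil_of_flatten_eq_nil {P : List (List α)} (hP : P.flatten = []) (hne : [] ∉ P) :
    P = [] :=
  List.eq_nil_iff_forall_not_mem.mpr fun a ha => hne (List.flatten_eq_nil_iff.mp hP a ha ▸ ha)

variable [DecidableEq α] (r : α → α → Prop) [DecidableRel r]

def chainSplits : List α → Finset (List (List α))
  | [] => {[]}
  | [x] => {[[x]]}
  | x :: y :: t =>
    (chainSplits (y :: t)).image ([x] :: ·) ∪
      if r x y then (chainSplits (y :: t)).image (List.modifyHead (x :: ·)) else ∅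

variable {r}

theorem mem_chainSplits_cons_cons {x y : α} {t : List α} {P : List (List α)} :
    P ∈ chainSplits r (x :: y :: t) ↔ (∃ Q ∈ chainSplits r (y :: t), [x] :: Q = P) ∨
      r x y ∧ ∃ Q ∈ chainSplits r (y :: t), Q.modifyHead (x :: ·) = P := by
  rw [chainSplits]
  split_ifs <;> simp [*]

theorem mem_chainSplits : ∀ {m : List α} {P : List (List α)},
    P ∈ chainSplits r m ↔ P.flatten = m ∧ [] ∉ P ∧ ∀ a ∈ P, a.IsChain r
  | [], P => by
    simp only [chainSplits, Finset.mem_singleton]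
    exact ⟨by rintro rfl; simp, fun ⟨hP, hne, _⟩ => eq_nil_of_flatten_eq_nil hP hne⟩
  | [x], P => by
    simp only [chainSplits, Finset.mem_singleton]
    refine ⟨by rintro rfl; simp, fun ⟨hP, hne, _⟩ => ?_⟩
    obtain ⟨a, Q, rfl, hQ⟩ := exists_eq_cons_cons_of_flatten_eq_cons hP hne
    obtain ⟨rfl, hQ⟩ := List.append_eq_nil_iff.mp hQ
    rw [eq_nil_of_flatten_eq_nil hQ fun h => hne (List.mem_cons_of_mem _ h)]
  | x :: y :: t, P => by
    have ih := @mem_chainSplits (y :: t)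
    simp only [mem_chainSplits_cons_cons, ih]
    constructor
    · rintro (⟨Q, ⟨hQ, hne, hch⟩, rfl⟩ | ⟨hxy, Q, ⟨hQ, hne, hch⟩, rfl⟩)
      · simp_all
      · obtain ⟨a, Q, rfl, hQ⟩ := exists_eq_cons_cons_of_flatten_eq_cons hQ hne
        simp_all [List.isChain_cons_cons]
    · rintro ⟨hP, hne, hch⟩
      obtain ⟨a, Q, rfl, hQ⟩ := exists_eq_cons_cons_of_flatten_eq_cons hP hne
      match a, hQ with
      | [], hQ => exact Or.inl ⟨Q, by simp_all⟩
      | z :: a, hQ =>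
        obtain ⟨rfl, hQ⟩ := List.cons_eq_cons.mp hQ
        have hxz : r x z := (List.isChain_cons_cons.mp (hch _ List.mem_cons_self)).1
        exact Or.inr ⟨hxz, (z :: a) :: Q, by simp_all [List.isChain_cons_cons], rfl⟩

theorem sum_chainSplits_neg_one_pow {R : Type*} [CommRing R] :
    ∀ m : List α, ∑ P ∈ chainSplits r m, (-1 : R) ^ P.length =
      if m.IsChain (fun u v => ¬ r u v) then (-1) ^ m.length else 0
  | [] => by simp [chainSplits]
  | [x] => by simp [chainSplits]
  | x :: y :: t => by
    have hsplit : ∑ P ∈ (chainSplits r (y :: t)).image ([x] :: ·), (-1 : R) ^ P.length =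
        -∑ P ∈ chainSplits r (y :: t), (-1 : R) ^ P.length := by
      rw [Finset.sum_image fun _ _ _ _ h => List.cons_injective h, ← Finset.sum_neg_distrib]
      simp [pow_succ]
    by_cases hxy : r x y
    · -- gluing `x` onto the first block and splitting it off cancel in pairs
      have hdisj : Disjoint ((chainSplits r (y :: t)).image ([x] :: ·))
          ((chainSplits r (y :: t)).image (List.modifyHead (x :: ·))) := by
        simp only [Finset.disjoint_left, Finset.mem_image, not_exists, not_and]
        rintro _ ⟨Q, hQ, rfl⟩ Q' hQ'
        obtain ⟨a, Q'', rfl, -⟩ :=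
          exists_eq_cons_cons_of_flatten_eq_cons (mem_chainSplits.mp hQ').1
            (mem_chainSplits.mp hQ').2.1
        simp
      rw [chainSplits, if_pos hxy, Finset.sum_union hdisj, hsplit,
        Finset.sum_image (modifyHead_injective List.cons_injective).injOn]
      simp [List.isChain_cons_cons, hxy]
    · rw [chainSplits, if_neg hxy, Finset.union_empty, hsplit, sum_chainSplits_neg_one_pow]
      simp only [List.isChain_cons_cons, hxy, not_false_eq_true, true_and, List.length_cons]
      split_ifs <;> simp [pow_succ]

end ChainSplits

theorem ncard_setOf_adj_and_rel (H : SimpleGraph V) {R : V → V → Prop} [Std.Asymm R]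
    (htot : ∀ u v, u ≠ v → R u v ∨ R v u) :
    {p : V × V | H.Adj p.1 p.2 ∧ R p.1 p.2}.ncard = H.edgeSet.ncard := by
  have hinj : Set.InjOn (fun p : V × V => s(p.1, p.2)) {p | H.Adj p.1 p.2 ∧ R p.1 p.2} := by
    rintro ⟨a, b⟩ ⟨-, hab⟩ ⟨c, d⟩ ⟨-, hcd⟩ h
    rcases Sym2.eq_iff.mp h with ⟨rfl, rfl⟩ | ⟨rfl, rfl⟩
    · rfl
    · exact absurd hcd (asymm hab)
  rw [← hinj.ncard_image]
  congr 1
  ext e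
  induction e using Sym2.ind with
  | _ u v =>
    refine ⟨fun ⟨_, ⟨hadj, _⟩, he⟩ => he ▸ hadj, fun hadj => ?_⟩
    rcases htot u v (H.ne_of_adj hadj) with h | h
    · exact ⟨(u, v), ⟨hadj, h⟩, rfl⟩
    · exact ⟨(v, u), ⟨hadj.symm, h⟩, Sym2.eq_swap⟩

section LinearOrders

variable [DecidableEq V]

abbrev precedes (l : List V) (u v : V) : Prop := l.idxOf u < l.idxOf v

instance (l : List V) : Std.Asymm (precedes l) := ⟨fun _ _ h h' => lt_asymm h h'⟩

instance (l : List V) : Trans (precedes l) (precedes l) (precedes l) := ⟨Nat.lt_trans⟩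

instance (l : List V) : Std.Asymm (after l) := ⟨fun _ _ h h' => lt_asymm h h'⟩

instance (l : List V) : Trans (after l) (after l) (after l) := ⟨fun h h' => Nat.lt_trans h' h⟩

theorem pairwise_precedes {l : List V} (hl : l.Nodup) : l.Pairwise (precedes l) := by
  rw [List.pairwise_iff_getElem]
  intro i j hi hj hij
  rwa [precedes, hl.idxOf_getElem, hl.idxOf_getElem]

theorem rel_of_pairwise_of_precedes {S : V → V → Prop} {l : List V} (hS : l.Pairwise S)
    {u v : V} (hu : u ∈ l) (hv : v ∈ l) (h : precedes l u v) : S u v := by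
  have := List.pairwise_iff_getElem.mp hS _ _
    (List.idxOf_lt_length_iff.2 hu) (List.idxOf_lt_length_iff.2 hv) h
  rwa [List.getElem_idxOf, List.getElem_idxOf] at this

theorem precedes_of_pairwise {S : V → V → Prop} [Std.Asymm S] {l : List V}
    (hS : l.Pairwise S) {u v : V} (hu : u ∈ l) (hv : v ∈ l) (huv : S u v) : precedes l u v := by
  rcases lt_trichotomy (l.idxOf u) (l.idxOf v) with h | h | h
  · exact h
  · obtain rfl := (List.idxOf_inj hu).mp h
    exact absurd huv (asymm huv)
  · exact absurd (rel_of_pairwise_of_precedes hS hv hu h) (asymm huv)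

theorem filter_mem_toFinset_eq {ℓ a : List V} (hℓ : ℓ.Nodup) (ha : a.Pairwise (precedes ℓ))
    (haℓ : a ⊆ ℓ) : ℓ.filter (fun v => v ∈ a.toFinset) = a := by
  have ha' : a.Nodup := ha.imp fun h e => by simp [e] at h
  refine List.Perm.eq_of_pairwise' ((pairwise_precedes hℓ).sublist List.filter_sublist) ha
    (List.perm_of_nodup_nodup_toFinset_eq (hℓ.filter _) ha' ?_)
  ext v
  simpa using fun h => haℓ h

theorem isChain_not_precedes_iff {ℓ m : List V} (hℓ : IsLinList ℓ) (hm : IsLinList m) :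
    m.IsChain (fun u v => ¬ precedes ℓ u v) ↔ m = ℓ.reverse := by
  have hrev : ℓ.reverse.Pairwise (after ℓ) :=
    List.pairwise_reverse.mpr (pairwise_precedes hℓ.1)
  refine ⟨fun h => ?_, by rintro rfl; exact hrev.isChain.imp fun _ _ => asymm⟩
  have hch : m.IsChain (after ℓ) := List.isChain_iff_getElem.mpr fun i hi => by
    have hne : m[i] ≠ m[i + 1] := by simp [hm.1.getElem_inj_iff]
    have hidx : ℓ.idxOf m[i] ≠ ℓ.idxOf m[i + 1] := by rwa [Ne, List.idxOf_inj (hℓ.2 _)]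
    exact lt_of_le_of_ne (not_lt.mp (List.isChain_iff_getElem.mp h i hi)) hidx.symm
  refine List.Perm.eq_of_pairwise' (List.isChain_iff_pairwise.mp hch) hrev
    (List.perm_of_nodup_nodup_toFinset_eq hm.1 (List.nodup_reverse.mpr hℓ.1) ?_)
  ext v
  simp [hm.2 v, hℓ.2 v]

theorem earlier_iff_precedes {ℓ : List V} (hℓ : ℓ.Nodup) {C : List (Finset V)}
    (hC : (linOfComp ℓ C).Nodup) {u v : V} (hu : u ∈ linOfComp ℓ C)
    (hv : v ∈ linOfComp ℓ C) (huv : after ℓ u v) :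
    earlier C u v ↔ precedes (linOfComp ℓ C) u v := by
  set L := C.map fun B => ℓ.filter fun v => v ∈ B
  have hmem (i : ℕ) (hi : i < L.length) (w : V) :
      w ∈ L[i] ↔ w ∈ ℓ ∧ w ∈ C[i]'(by simpa [L] using hi) := by
    simp [L]
  obtain ⟨hblocks, hacross⟩ := List.pairwise_flatten.mp (pairwise_precedes hC)
  constructor
  · rintro ⟨i, j, hij, hui, hvj⟩
    have hsub : ∀ w ∈ linOfComp ℓ C, w ∈ ℓ := by
      simp +contextual [linOfComp]
    exact List.pairwise_iff_getElem.mp hacross i j (by simp) (by simp) hij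
      u ((hmem ..).mpr ⟨hsub u hu, hui⟩) v ((hmem ..).mpr ⟨hsub v hv, hvj⟩)
  · intro hprec
    obtain ⟨_, ha, hua⟩ := List.mem_flatten.mp hu
    obtain ⟨i, hi, rfl⟩ := List.getElem_of_mem ha
    obtain ⟨_, hb, hvb⟩ := List.mem_flatten.mp hv
    obtain ⟨j, hj, rfl⟩ := List.getElem_of_mem hb
    rcases lt_trichotomy i j with hij | rfl | hji
    · exact ⟨⟨i, by simpa [L] using hi⟩, ⟨j, by simpa [L] using hj⟩, hij,
        ((hmem ..).mp hua).2, ((hmem ..).mp hvb).2⟩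
    · -- a block is sorted by `ℓ`, so `v` would come before `u` in it
      have hsorted : L[i].Pairwise (precedes ℓ) :=
        (pairwise_precedes hℓ).sublist (by simp [L])
      exact absurd (rel_of_pairwise_of_precedes (hblocks _ ha) hvb hua
        (precedes_of_pairwise hsorted hvb hua huv)) (asymm hprec)
    · exact absurd (List.pairwise_iff_getElem.mp hacross j i hj hi hji v hvb u hua) (asymm hprec)

open MvPolynomial in
noncomputable def inversionWeight (G : SimpleGraph V) (ℓ m : List V) : MvPolynomial (Fin 2) ℤ :=
  X 0 ^ {p : V × V | precedes m p.1 p.2 ∧ G.Adj p.1 p.2 ∧ after ℓ p.1 p.2}.ncard *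
    X 1 ^ {p : V × V | precedes m p.1 p.2 ∧ p.1 ≠ p.2 ∧ ¬ G.Adj p.1 p.2 ∧
      after ℓ p.1 p.2}.ncard

theorem weight_eq_inversionWeight (G : SimpleGraph V) {ℓ m : List V} (hℓ : ℓ.Nodup)
    (hm : IsLinList m) {C : List (Finset V)} (hC : linOfComp ℓ C = m) :
    (MvPolynomial.X 0 : MvPolynomial (Fin 2) ℤ) ^
        {p : V × V | earlier C p.1 p.2 ∧ G.Adj p.1 p.2 ∧ after ℓ p.1 p.2}.ncard *
      MvPolynomial.X 1 ^ {p : V × V | earlier C p.1 p.2 ∧ p.1 ≠ p.2 ∧ ¬ G.Adj p.1 p.2 ∧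
        after ℓ p.1 p.2}.ncard = inversionWeight G ℓ m := by
  subst hC
  have key (p : V × V) (h : after ℓ p.1 p.2) :=
    earlier_iff_precedes hℓ hm.1 (hm.2 p.1) (hm.2 p.2) h
  unfold inversionWeight
  congr 3 <;> ext p <;> have := key p <;> simp only [Set.mem_ofPred_eq] <;> tauto

theorem inversionWeight_reverse (G : SimpleGraph V) {ℓ : List V} (hℓ : IsLinList ℓ) :
    inversionWeight G ℓ ℓ.reverse =
      MvPolynomial.X 0 ^ G.edgeSet.ncard * MvPolynomial.X 1 ^ Gᶜ.edgeSet.ncard := by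
  have htot (u v : V) (h : u ≠ v) : after ℓ u v ∨ after ℓ v u := by
    have := mt (List.idxOf_inj (hℓ.2 u)).mp h
    unfold after
    omega
  have hrev (p : V × V) (h : after ℓ p.1 p.2) : precedes ℓ.reverse p.1 p.2 :=
    precedes_of_pairwise (List.pairwise_reverse.mpr (pairwise_precedes hℓ.1))
      (List.mem_reverse.mpr (hℓ.2 _)) (List.mem_reverse.mpr (hℓ.2 _)) h
  rw [inversionWeight, ← ncard_setOf_adj_and_rel G htot, ← ncard_setOf_adj_and_rel Gᶜ htot]
  congr 3 <;> ext p <;> have := hrev p <;>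
    simp only [Set.mem_ofPred_eq, SimpleGraph.compl_adj] <;> tauto

theorem toFinset_filter_mem {ℓ : List V} (hℓ : ∀ v, v ∈ ℓ) (B : Finset V) :
    (ℓ.filter fun v => v ∈ B).toFinset = B := by
  ext v
  simp [hℓ v]

theorem isComposition_map_toFinset {P : List (List V)} (hP : P.flatten.Nodup) (hne : [] ∉ P) :
    IsComposition P.flatten.toFinset (P.map List.toFinset) := by
  refine ⟨?_, ?_, ?_⟩
  · simp only [List.mem_map, forall_exists_index, and_imp, forall_apply_eq_imp_iff₂]
    exact fun a ha => List.toFinset_nonempty_iff a |>.mpr (ne_of_mem_of_not_mem ha hne)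
  · exact (List.nodup_flatten.mp hP).2.map _
      fun _ _ h => List.disjoint_toFinset_iff_disjoint.mpr h
  · clear hP hne
    induction P with
    | nil => rfl
    | cons a P ih => simp [ih]

theorem map_filter_mem_chainSplits {ℓ : List V} (hℓ : IsLinList ℓ) {C : List (Finset V)}
    (hC : ∀ B ∈ C, B.Nonempty) :
    (C.map fun B => ℓ.filter fun v => v ∈ B) ∈
      chainSplits (precedes ℓ) (linOfComp ℓ C) := by
  refine mem_chainSplits.mpr ⟨rfl, fun h => ?_, ?_⟩
  · obtain ⟨B, hB, hBnil⟩ := List.mem_map.mp h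
    obtain ⟨v, hv⟩ := hC B hB
    simpa [hℓ.2 v, hv] using congrArg (v ∈ ·) hBnil
  · simp only [List.mem_map, forall_exists_index, and_imp, forall_apply_eq_imp_iff₂]
    exact fun B _ => ((pairwise_precedes hℓ.1).sublist List.filter_sublist).isChain

theorem map_filter_map_toFinset {ℓ m : List V} (hℓ : ℓ.Nodup) (hmℓ : m ⊆ ℓ)
    {P : List (List V)} (hP : P ∈ chainSplits (precedes ℓ) m) :
    (P.map List.toFinset).map (fun B => ℓ.filter fun v => v ∈ B) = P := by
  obtain ⟨rfl, -, hch⟩ := mem_chainSplits.mp hP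
  rw [List.map_map]
  conv_rhs => rw [← List.map_id P]
  refine List.map_congr_left fun a ha => ?_
  exact filter_mem_toFinset_eq hℓ (List.isChain_iff_pairwise.mp (hch a ha))
    fun v hv => hmℓ (List.mem_flatten.mpr ⟨a, ha, hv⟩)

variable [Fintype V]

theorem length_eq_card {ℓ : List V} (hℓ : IsLinList ℓ) : ℓ.length = Fintype.card V := by
  rw [← List.toFinset_card_of_nodup hℓ.1,
    Finset.eq_univ_of_forall fun v => List.mem_toFinset.mpr (hℓ.2 v), Finset.card_univ]

theorem setOf_linOfComp_eq_image {ℓ m : List V} (hℓ : IsLinList ℓ) (hm : IsLinList m) :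
    {C : List (Finset V) | IsComposition Finset.univ C ∧ linOfComp ℓ C = m} =
      List.map List.toFinset '' ↑(chainSplits (precedes ℓ) m) := by
  ext C
  constructor
  · rintro ⟨hC, rfl⟩
    refine ⟨_, map_filter_mem_chainSplits hℓ hC.1, ?_⟩
    rw [List.map_map]
    conv_rhs => rw [← List.map_id C]
    exact List.map_congr_left fun B _ => toFinset_filter_mem hℓ.2 B
  · rintro ⟨P, hP, rfl⟩
    have hinv := map_filter_map_toFinset hℓ.1 (fun v _ => hℓ.2 v) hP
    obtain ⟨hflat, hne, -⟩ := mem_chainSplits.mp hP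
    have hcomp := isComposition_map_toFinset (hflat ▸ hm.1) hne
    rw [hflat, Finset.eq_univ_of_forall fun v => List.mem_toFinset.mpr (hm.2 v)] at hcomp
    exact ⟨hcomp, by rw [linOfComp, hinv, hflat]⟩

theorem finsum_neg_one_pow_length_compositions {R : Type*} [CommRing R] {ℓ m : List V}
    (hℓ : IsLinList ℓ) (hm : IsLinList m) :
    ∑ᶠ C ∈ {C : List (Finset V) | IsComposition Finset.univ C ∧ linOfComp ℓ C = m},
        (-1 : R) ^ C.length = if m = ℓ.reverse then (-1) ^ m.length else 0 := by
  have hinj :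
      Set.InjOn (List.map List.toFinset) (chainSplits (precedes ℓ) m : Set (List (List V))) :=
    fun P hP Q hQ h => by
      rw [← map_filter_map_toFinset hℓ.1 (fun v _ => hℓ.2 v) (Finset.mem_coe.mp hP),
        ← map_filter_map_toFinset hℓ.1 (fun v _ => hℓ.2 v) (Finset.mem_coe.mp hQ), h]
  rw [setOf_linOfComp_eq_image hℓ hm, finsum_mem_image hinj, finsum_mem_coe_finset]
  simp only [List.length_map]
  rw [sum_chainSplits_neg_one_pow, if_congr (isChain_not_precedes_iff hℓ hm) rfl rfl]

theorem finsum_compositions_eq_ite_mul_inversionWeight (G : SimpleGraph V) {ℓ m : List V}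
    (hℓ : IsLinList ℓ) (hm : IsLinList m) :
    ∑ᶠ C ∈ {C : List (Finset V) | IsComposition Finset.univ C ∧ linOfComp ℓ C = m},
        ((-1 : MvPolynomial (Fin 2) ℤ)) ^ C.length *
          (MvPolynomial.X 0) ^
            {p : V × V | earlier C p.1 p.2 ∧ G.Adj p.1 p.2 ∧ after ℓ p.1 p.2}.ncard *
          (MvPolynomial.X 1) ^
            {p : V × V | earlier C p.1 p.2 ∧ p.1 ≠ p.2 ∧ ¬ G.Adj p.1 p.2 ∧
              after ℓ p.1 p.2}.ncard =
      (if m = ℓ.reverse then (-1) ^ m.length else 0) * inversionWeight G ℓ m := by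
  rw [← finsum_neg_one_pow_length_compositions hℓ hm, finsum_mem_mul]
  refine finsum_mem_congr rfl fun C hC => ?_
  rw [mul_assoc, weight_eq_inversionWeight G hℓ.1 hm hC.2]

end LinearOrders

theorem antipode_linear_orders_general {V : Type*} [Fintype V] [DecidableEq V]
    (G : SimpleGraph V) (ℓ : List V) (hℓ : IsLinList ℓ)
    (m : List V) (hm : IsLinList m) :
    (m = ℓ.reverse →
      ∑ᶠ C ∈ {C : List (Finset V) | IsComposition Finset.univ C ∧ linOfComp ℓ C = m},
          ((-1 : MvPolynomial (Fin 2) ℤ)) ^ C.length *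
            (MvPolynomial.X 0) ^
              {p : V × V | earlier C p.1 p.2 ∧ G.Adj p.1 p.2 ∧ after ℓ p.1 p.2}.ncard *
            (MvPolynomial.X 1) ^
              {p : V × V | earlier C p.1 p.2 ∧ p.1 ≠ p.2 ∧ ¬ G.Adj p.1 p.2 ∧
                after ℓ p.1 p.2}.ncard =
        (-1 : MvPolynomial (Fin 2) ℤ) ^ Fintype.card V *
          (MvPolynomial.X 0) ^ G.edgeSet.ncard * (MvPolynomial.X 1) ^ Gᶜ.edgeSet.ncard) ∧
    (m ≠ ℓ.reverse →
      ∑ᶠ C ∈ {C : List (Finset V) | IsComposition Finset.univ C ∧ linOfComp ℓ C = m},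
          ((-1 : MvPolynomial (Fin 2) ℤ)) ^ C.length *
            (MvPolynomial.X 0) ^
              {p : V × V | earlier C p.1 p.2 ∧ G.Adj p.1 p.2 ∧ after ℓ p.1 p.2}.ncard *
            (MvPolynomial.X 1) ^
              {p : V × V | earlier C p.1 p.2 ∧ p.1 ≠ p.2 ∧ ¬ G.Adj p.1 p.2 ∧
                after ℓ p.1 p.2}.ncard = 0) := by
  rw [finsum_compositions_eq_ite_mul_inversionWeight G hℓ hm]
  refine ⟨fun h => ?_, fun h => by rw [if_neg h, zero_mul]⟩
  subst h
  rw [if_pos rfl, inversionWeight_reverse G hℓ, List.length_reverse, length_eq_card hℓ,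
    mul_assoc]

theorem antipode_linear_orders {V : Type*} [Fintype V] [DecidableEq V] [Nonempty V]
    (G : SimpleGraph V) (ℓ : List V) (hℓ : IsLinList ℓ)
    (m : List V) (hm : IsLinList m) :
    (m = ℓ.reverse →
      ∑ᶠ C ∈ {C : List (Finset V) | IsComposition Finset.univ C ∧ linOfComp ℓ C = m},
          ((-1 : MvPolynomial (Fin 2) ℤ)) ^ C.length *
            (MvPolynomial.X 0) ^
              {p : V × V | earlier C p.1 p.2 ∧ G.Adj p.1 p.2 ∧ after ℓ p.1 p.2}.ncard *
            (MvPolynomial.X 1) ^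
              {p : V × V | earlier C p.1 p.2 ∧ p.1 ≠ p.2 ∧ ¬ G.Adj p.1 p.2 ∧
                after ℓ p.1 p.2}.ncard =
        (-1 : MvPolynomial (Fin 2) ℤ) ^ Fintype.card V *
          (MvPolynomial.X 0) ^ G.edgeSet.ncard * (MvPolynomial.X 1) ^ Gᶜ.edgeSet.ncard) ∧
    (m ≠ ℓ.reverse →
      ∑ᶠ C ∈ {C : List (Finset V) | IsComposition Finset.univ C ∧ linOfComp ℓ C = m},
          ((-1 : MvPolynomial (Fin 2) ℤ)) ^ C.length *
            (MvPolynomial.X 0) ^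
              {p : V × V | earlier C p.1 p.2 ∧ G.Adj p.1 p.2 ∧ after ℓ p.1 p.2}.ncard *
            (MvPolynomial.X 1) ^
              {p : V × V | earlier C p.1 p.2 ∧ p.1 ≠ p.2 ∧ ¬ G.Adj p.1 p.2 ∧
                after ℓ p.1 p.2}.ncard = 0) :=
  antipode_linear_orders_general G ℓ hℓ m hm

end GraphSpecies
end
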